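/- arXiv:2212.02635 — 2 statements merged into one kernel-verified Lean document; each statement's English description precedes it below -/
import Mathlib

section
/- Let A and B be finite sets in a universe U, each nonempty, and let σ : U → ℝ be an injective function (a random assignment of distinct priorities). Define h(S) = the element of S minimizing σ. If the minimizer of σ over A ∪ B lies in A ∩ B, then h(A) = h(B); conversely if h(A) = h(B) then the minimizer of σ over A ∪ B lies in A ∩ B. Consequently, when σ is chosen uniformly at random among injections (equivalently, the minimum of A ∪ B is uniform over A ∪ B), the probability that h(A) = h(B) equals |A ∩ B| / |A ∪ B|. -/
open Finset

theorem Function.Injective.eq_of_isMinOn_of_subset {α β : Type*} [PartialOrder β] {σ : α → β}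
    (hσ : Function.Injective σ) {s t : Set α} (hst : s ⊆ t) {a m : α}
    (ha : IsMinOn σ s a) (hm : IsMinOn σ t m) (has : a ∈ s) (hms : m ∈ s) : m = a :=
  hσ <| le_antisymm (isMinOn_iff.1 hm a (hst has)) (isMinOn_iff.1 ha m hms)

theorem stmt_10_general {U : Type*} [DecidableEq U] (A B : Finset U)
    (σ : U → ℝ) (hσ : Function.Injective σ)
    (a b m : U)
    (ha : a ∈ A ∧ ∀ x ∈ A, σ a ≤ σ x)
    (hb : b ∈ B ∧ ∀ x ∈ B, σ b ≤ σ x)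
    (hm : m ∈ A ∪ B ∧ ∀ x ∈ A ∪ B, σ m ≤ σ x) :
    a = b ↔ m ∈ A ∩ B := by
  have hmMin : IsMinOn σ (↑(A ∪ B) : Set U) m := isMinOn_iff.2 hm.2
  have hm_eq_a : m ∈ A → m = a :=
    hσ.eq_of_isMinOn_of_subset (by simp) (isMinOn_iff.2 ha.2) hmMin ha.1
  have hm_eq_b : m ∈ B → m = b :=
    hσ.eq_of_isMinOn_of_subset (by simp) (isMinOn_iff.2 hb.2) hmMin hb.1
  constructor
  · rintro rfl
    rcases mem_union.1 hm.1 with hmA_mem | hmB_mem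
    · exact mem_inter.2 ⟨hmA_mem, hm_eq_a hmA_mem ▸ hb.1⟩
    · exact mem_inter.2 ⟨hm_eq_b hmB_mem ▸ ha.1, hmB_mem⟩
  · intro hmAB
    rw [← hm_eq_a (mem_inter.1 hmAB).1, ← hm_eq_b (mem_inter.1 hmAB).2]

/-- MinHash, deterministic core: for an injective priority function `σ`, the
minimizers `a` of `σ` over `A`, `b` over `B`, and `m` over `A ∪ B` satisfy
`a = b` if and only if `m ∈ A ∩ B`. -/
theorem stmt_10 {U : Type*} [DecidableEq U] (A B : Finset U)
    (hA : A.Nonempty) (hB : B.Nonempty) (σ : U → ℝ) (hσ : Function.Injective σ)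
    (a b m : U)
    (ha : a ∈ A ∧ ∀ x ∈ A, σ a ≤ σ x)
    (hb : b ∈ B ∧ ∀ x ∈ B, σ b ≤ σ x)
    (hm : m ∈ A ∪ B ∧ ∀ x ∈ A ∪ B, σ m ≤ σ x) :
    a = b ↔ m ∈ A ∩ B :=
  stmt_10_general A B σ hσ a b m ha hb hm
end

section
/- Fix a finite universe U, nonempty finite sets A, B ⊆ U, and let σ range uniformly over all bijections U → Fin |U|. With h_σ(S) = argmin_{s∈S} σ(s), the number of bijections σ with h_σ(A) = h_σ(B), divided by the total number of bijections, equals |A ∩ B| / |A ∪ B|. -/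
/-- The MinHash of a nonempty finite set `S` under a bijective priority
`σ : U ≃ Fin n`: the unique element of `S` where `σ` attains its minimum over `S`. -/
noncomputable def minHash {U : Type*} [DecidableEq U] {n : ℕ} (σ : U ≃ Fin n)
    (S : Finset U) (hS : S.Nonempty) : U :=
  σ.symm ((S.image σ).min' (hS.image σ))

lemma minHash_mem {U : Type*} [DecidableEq U] {n : ℕ} (σ : U ≃ Fin n)
    (S : Finset U) (hS : S.Nonempty) : minHash σ S hS ∈ S := by
  have h := (S.image σ).min'_mem (hS.image σ)
  rw [Finset.mem_image] at h
  obtain ⟨s, hs, hsa⟩ := h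
  simpa [minHash, ← hsa] using hs

lemma minHash_apply {U : Type*} [DecidableEq U] {n : ℕ} (σ : U ≃ Fin n)
    (S : Finset U) (hS : S.Nonempty) :
    σ (minHash σ S hS) = (S.image σ).min' (hS.image σ) := by
  simp [minHash]

/-- Key: collision iff the argmin over the union lies in the intersection. -/
lemma minHash_eq_iff {U : Type*} [DecidableEq U] {n : ℕ} (σ : U ≃ Fin n)
    (A B : Finset U) (hA : A.Nonempty) (hB : B.Nonempty) :
    minHash σ A hA = minHash σ B hB ↔
      minHash σ (A ∪ B) (hA.mono Finset.subset_union_left) ∈ A ∩ B := by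
  set hC : (A ∪ B).Nonempty := hA.mono Finset.subset_union_left
  have himg : (A ∪ B).image σ = A.image σ ∪ B.image σ := Finset.image_union _ _
  have hminC : ((A ∪ B).image σ).min' (hC.image σ) =
      min ((A.image σ).min' (hA.image σ)) ((B.image σ).min' (hB.image σ)) := by
    apply le_antisymm
    · rcases min_cases ((A.image σ).min' (hA.image σ)) ((B.image σ).min' (hB.image σ)) with
        ⟨h, _⟩ | ⟨h, _⟩ <;> rw [h]
      · exact Finset.min'_le _ _ (by
          rw [himg]; exact Finset.mem_union_left _ ((A.image σ).min'_mem (hA.image σ)))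
      · exact Finset.min'_le _ _ (by
          rw [himg]; exact Finset.mem_union_right _ ((B.image σ).min'_mem (hB.image σ)))
    · apply Finset.le_min'
      intro y hy
      rw [himg, Finset.mem_union] at hy
      rcases hy with hy | hy
      · exact le_trans (min_le_left _ _) (Finset.min'_le _ _ hy)
      · exact le_trans (min_le_right _ _) (Finset.min'_le _ _ hy)
  constructor
  · intro h
    have hmemA : minHash σ A hA ∈ A := minHash_mem σ A hA
    have hmemB : minHash σ A hA ∈ B := h ▸ minHash_mem σ B hB
    have hAB : (A.image σ).min' (hA.image σ) = (B.image σ).min' (hB.image σ) := by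
      rw [← minHash_apply σ A hA, ← minHash_apply σ B hB, h]
    have heq : σ (minHash σ (A ∪ B) hC) = σ (minHash σ A hA) := by
      rw [minHash_apply, minHash_apply, hminC, ← hAB, min_self]
    rw [σ.injective heq]
    exact Finset.mem_inter.2 ⟨hmemA, hmemB⟩
  · intro h
    rw [Finset.mem_inter] at h
    have h1 : (A.image σ).min' (hA.image σ) = σ (minHash σ (A ∪ B) hC) := by
      apply le_antisymm
      · exact Finset.min'_le _ _ (Finset.mem_image_of_mem σ h.1)
      · rw [minHash_apply, hminC]; exact min_le_left _ _
    have h2 : (B.image σ).min' (hB.image σ) = σ (minHash σ (A ∪ B) hC) := by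
      apply le_antisymm
      · exact Finset.min'_le _ _ (Finset.mem_image_of_mem σ h.2)
      · rw [minHash_apply, hminC]; exact min_le_right _ _
    show σ.symm _ = σ.symm _
    rw [h1, h2]

lemma image_swap_self {U : Type*} [DecidableEq U] {S : Finset U} {x y : U}
    (hx : x ∈ S) (hy : y ∈ S) : S.image (Equiv.swap x y) = S := by
  apply Finset.eq_of_subset_of_card_le
  · intro u hu
    rw [Finset.mem_image] at hu
    obtain ⟨v, hv, rfl⟩ := hu
    rcases eq_or_ne v x with rfl | hvx
    · simpa [Equiv.swap_apply_left] using hy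
    rcases eq_or_ne v y with rfl | hvy
    · simpa [Equiv.swap_apply_right] using hx
    · rwa [Equiv.swap_apply_of_ne_of_ne hvx hvy]
  · rw [Finset.card_image_of_injective _ (Equiv.injective _)]

lemma minHash_swap {U : Type*} [DecidableEq U] {n : ℕ} (σ : U ≃ Fin n)
    (S : Finset U) (hS : S.Nonempty) {x y : U} (hx : x ∈ S) (hy : y ∈ S)
    (h : minHash σ S hS = x) :
    minHash ((Equiv.swap x y).trans σ) S hS = y := by
  have himg : S.image ((Equiv.swap x y).trans σ) = S.image σ := by
    rw [show ((Equiv.swap x y).trans σ : U → Fin n) = σ ∘ (Equiv.swap x y) from rfl,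
      ← Finset.image_image, image_swap_self hx hy]
  unfold minHash at h ⊢
  have hmin : ((S.image ⇑((Equiv.swap x y).trans σ)).min' (hS.image _)) =
      ((S.image ⇑σ).min' (hS.image _)) := by
    congr 1
  rw [hmin]
  simp only [Equiv.symm_trans_apply]
  rw [h]
  exact Equiv.swap_apply_left x y

lemma minHash_swap' {U : Type*} [DecidableEq U] {n : ℕ} (σ : U ≃ Fin n)
    (S : Finset U) (hS : S.Nonempty) {x y : U} (hx : x ∈ S) (hy : y ∈ S)
    (h : minHash σ S hS = y) :
    minHash ((Equiv.swap x y).trans σ) S hS = x := by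
  rw [Equiv.swap_comm]
  exact minHash_swap σ S hS hy hx h

lemma fiber_card_eq {U : Type*} [Fintype U] [DecidableEq U]
    (S : Finset U) (hS : S.Nonempty) {x y : U} (hx : x ∈ S) (hy : y ∈ S) :
    (Finset.univ.filter (fun σ : U ≃ Fin (Fintype.card U) => minHash σ S hS = x)).card =
    (Finset.univ.filter (fun σ : U ≃ Fin (Fintype.card U) => minHash σ S hS = y)).card := by
  refine Finset.card_nbij' (fun σ => (Equiv.swap x y).trans σ)
    (fun σ => (Equiv.swap x y).trans σ) ?_ ?_ ?_ ?_
  · intro σ hσ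
    rw [Finset.mem_coe, Finset.mem_filter] at hσ ⊢
    exact ⟨Finset.mem_univ _, minHash_swap σ S hS hx hy hσ.2⟩
  · intro σ hσ
    rw [Finset.mem_coe, Finset.mem_filter] at hσ ⊢
    exact ⟨Finset.mem_univ _, minHash_swap' σ S hS hx hy hσ.2⟩
  · intro σ _
    ext u
    simp [Equiv.swap_apply_self]
  · intro σ _
    ext u
    simp [Equiv.swap_apply_self]

/-- MinHash collision probability (exact counting version): the fraction of
bijections `σ : U ≃ Fin |U|` with `h_σ(A) = h_σ(B)` equals `|A ∩ B| / |A ∪ B|`. -/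
theorem stmt_11 {U : Type*} [Fintype U] [DecidableEq U] (A B : Finset U)
    (hA : A.Nonempty) (hB : B.Nonempty) :
    (Nat.card {σ : U ≃ Fin (Fintype.card U) //
        minHash σ A hA = minHash σ B hB} : ℝ) /
      (Nat.card (U ≃ Fin (Fintype.card U)) : ℝ) =
    ((A ∩ B).card : ℝ) / ((A ∪ B).card : ℝ) := by
  classical
  set C := A ∪ B with hCdef
  have hC : C.Nonempty := hA.mono Finset.subset_union_left
  obtain ⟨x0, hx0⟩ := id hC
  set N := (Finset.univ.filter
      (fun σ : U ≃ Fin (Fintype.card U) => minHash σ C hC = x0)).card with hN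
  have hfib : ∀ x ∈ C, (Finset.univ.filter
      (fun σ : U ≃ Fin (Fintype.card U) => minHash σ C hC = x)).card = N :=
    fun x hx => fiber_card_eq C hC hx hx0
  have hpart : ∀ T : Finset U, T ⊆ C →
      (Finset.univ.filter
        (fun σ : U ≃ Fin (Fintype.card U) => minHash σ C hC ∈ T)).card = T.card * N := by
    intro T hT
    have hsplit : Finset.univ.filter
        (fun σ : U ≃ Fin (Fintype.card U) => minHash σ C hC ∈ T) =
        T.biUnion (fun x => Finset.univ.filter
          (fun σ : U ≃ Fin (Fintype.card U) => minHash σ C hC = x)) := by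
      ext σ
      simp [Finset.mem_biUnion, eq_comm]
    rw [hsplit, Finset.card_biUnion]
    · rw [Finset.sum_congr rfl (fun x hx => hfib x (hT hx)), Finset.sum_const, smul_eq_mul]
    · intro a _ b _ hab
      simp only [Finset.disjoint_filter]
      intro σ _ h1 h2
      exact hab (by rw [← h1, h2])
  have htotal : Nat.card (U ≃ Fin (Fintype.card U)) = C.card * N := by
    rw [Nat.card_eq_fintype_card, ← hpart C (le_refl C)]
    rw [Finset.filter_true_of_mem (fun σ _ => minHash_mem σ C hC)]
    simp
  have hcoll : Nat.card {σ : U ≃ Fin (Fintype.card U) //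
      minHash σ A hA = minHash σ B hB} = (A ∩ B).card * N := by
    rw [Nat.card_eq_fintype_card, Fintype.card_subtype]
    rw [← hpart (A ∩ B) (Finset.inter_subset_left.trans Finset.subset_union_left)]
    congr 1
    apply Finset.filter_congr
    intro σ _
    simpa using minHash_eq_iff σ A B hA hB
  have hNpos : 0 < N := by
    rcases Nat.eq_zero_or_pos N with h | h
    · exfalso
      have h0 : Nat.card (U ≃ Fin (Fintype.card U)) = 0 := by rw [htotal, h, mul_zero]
      have hne : Nonempty (U ≃ Fin (Fintype.card U)) := ⟨Fintype.equivFin U⟩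
      rw [Nat.card_eq_fintype_card] at h0
      exact Fintype.card_ne_zero h0
    · exact h
  rw [htotal, hcoll]
  push_cast
  rw [mul_div_mul_right _ _ (by exact_mod_cast hNpos.ne')]
end
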